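/- arXiv:2208.05020 — 4 statements merged into one kernel-verified Lean document; each statement's English description precedes it below -/
import Mathlib

section
/- Let Ξ be a real vector space with antisymmetric bilinear form σ, and let χ : Ξ → ℂ be a normalized σ-twisted positive definite function (i.e. χ(0)=1 and for every finite family ξ₁,…,ξ_N the matrix M_{kℓ} = χ(ξ_ℓ − ξ_k)·exp(−(i/2)σ(ξ_k,ξ_ℓ)) is positive semidefinite). If |χ(η)| = 1 for some η, then for all ξ ∈ Ξ one has χ(ξ+η) = χ(ξ)·χ(η)·exp((i/2)σ(ξ,η)). -/
open Complex BigOperators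

/-- The quadratic form associated to the σ-twisted matrix
`M_{kℓ} = χ(ξ_ℓ − ξ_k) · exp(−(i/2) σ(ξ_k, ξ_ℓ))`. -/
noncomputable def twistedSum {Ξ : Type*} [AddCommGroup Ξ] (σ : Ξ → Ξ → ℝ) (χ : Ξ → ℂ)
    {N : ℕ} (ξ : Fin N → Ξ) (c : Fin N → ℂ) : ℂ :=
  ∑ k, ∑ l, (starRingEnd ℂ) (c k) * c l * χ (ξ l - ξ k) *
    Complex.exp (-(Complex.I / 2) * ((σ (ξ k) (ξ l) : ℝ) : ℂ))

/-- `χ` is σ-twisted positive definite: every matrix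
`M_{kℓ} = χ(ξ_ℓ − ξ_k) exp(−(i/2)σ(ξ_k,ξ_ℓ))` is positive semidefinite, expressed
via nonnegativity of the associated quadratic form. -/
def IsTwistedPosDef {Ξ : Type*} [AddCommGroup Ξ] (σ : Ξ → Ξ → ℝ) (χ : Ξ → ℂ) : Prop :=
  ∀ (N : ℕ) (ξ : Fin N → Ξ) (c : Fin N → ℂ),
    0 ≤ (twistedSum σ χ ξ c).re ∧ (twistedSum σ χ ξ c).im = 0

/-!
The twisted matrix of `χ` at the points `0, η, ξ + η` is positive semidefinite with unit
diagonal, and its `(0, 1)` entry `χ η` has modulus one. This is the equality case of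
Cauchy–Schwarz: the vector `χ η • e₀ - e₁` has vanishing quadratic form, hence lies in the kernel,
so row `1` is `conj (χ η)` times row `0`. The `(1, 2)` entries of these rows give the identity.
-/

open scoped ComplexOrder

open Matrix

namespace Matrix

variable {n 𝕜 : Type*} [Fintype n]

lemma isHermitian_of_forall_im_star_dotProduct_mulVec_eq_zero {A : Matrix n n ℂ}
    (hA : ∀ x, (star x ⬝ᵥ A *ᵥ x).im = 0) : A.IsHermitian := by
  classical
  rw [← isSymmetric_toEuclideanLin_iff, LinearMap.isSymmetric_iff_inner_map_self_real]
  intro v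
  rw [Complex.conj_eq_iff_im, EuclideanSpace.inner_eq_star_dotProduct, dotProduct_comm,
    ← star_star (WithLp.ofLp v), star_dotProduct_star]
  simpa using hA (WithLp.ofLp v)

lemma PosSemidef.apply_eq_star_mul_of_norm_eq_one [RCLike 𝕜] {A : Matrix n n 𝕜}
    (hA : A.PosSemidef) {i j : n} (hi : A i i = 1) (hj : A j j = 1) (hij : ‖A i j‖ = 1)
    (k : n) : A j k = star (A i j) * A i k := by
  classical
  have hunit : starRingEnd 𝕜 (A i j) * A i j = 1 := by
    rw [RCLike.conj_mul, hij]; simp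
  have hji : A j i = star (A i j) := (hA.1.apply j i).symm
  set x : n → 𝕜 := A i j • Pi.single i 1 - Pi.single j 1
  have hquad : star x ⬝ᵥ A *ᵥ x = 0 := by
    simp only [x, star_sub, star_smul, RCLike.star_def, Pi.star_single, star_one, mulVec_sub,
      mulVec_smul, mulVec_single, MulOpposite.op_one, one_smul, dotProduct_sub, dotProduct_smul,
      sub_dotProduct, smul_dotProduct, single_dotProduct, col_apply, hi, hj, hji, mul_one,
      smul_eq_mul, one_mul, sub_self, mul_zero, zero_sub, neg_sub]
    linear_combination -hunit
  have hkj : A k j = A i j * A k i := by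
    have hker := congrFun ((hA.dotProduct_mulVec_zero_iff x).1 hquad) k
    simp only [x, mulVec_sub, mulVec_smul, mulVec_single, MulOpposite.op_one, one_smul,
      Pi.sub_apply, Pi.smul_apply, col_apply, smul_eq_mul, Pi.zero_apply] at hker
    linear_combination -hker
  rw [← hA.1.apply j k, hkj, star_mul', hA.1.apply i k, mul_comm]

end Matrix

section Twisted

variable {Ξ : Type*} [AddCommGroup Ξ]

noncomputable def twistedMatrix (σ : Ξ → Ξ → ℝ) (χ : Ξ → ℂ) {N : ℕ} (ξ : Fin N → Ξ) :
    Matrix (Fin N) (Fin N) ℂ :=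
  Matrix.of fun k l => χ (ξ l - ξ k) * exp (-(I / 2) * (σ (ξ k) (ξ l) : ℂ))

lemma twistedSum_eq_star_dotProduct_mulVec (σ : Ξ → Ξ → ℝ) (χ : Ξ → ℂ) {N : ℕ}
    (ξ : Fin N → Ξ) (c : Fin N → ℂ) :
    twistedSum σ χ ξ c = star c ⬝ᵥ twistedMatrix σ χ ξ *ᵥ c := by
  simp only [twistedSum, twistedMatrix, dotProduct, mulVec, Finset.mul_sum, Pi.star_apply,
    RCLike.star_def, of_apply]
  exact Finset.sum_congr rfl fun k _ => Finset.sum_congr rfl fun l _ => by ring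

lemma IsTwistedPosDef.posSemidef_twistedMatrix {σ : Ξ → Ξ → ℝ} {χ : Ξ → ℂ}
    (hχ : IsTwistedPosDef σ χ) {N : ℕ} (ξ : Fin N → Ξ) : (twistedMatrix σ χ ξ).PosSemidef := by
  have hquad (c : Fin N → ℂ) : 0 ≤ star c ⬝ᵥ twistedMatrix σ χ ξ *ᵥ c := by
    rw [← twistedSum_eq_star_dotProduct_mulVec, Complex.nonneg_iff, eq_comm]
    exact hχ N ξ c
  exact .of_dotProduct_mulVec_nonneg
    (isHermitian_of_forall_im_star_dotProduct_mulVec_eq_zero fun c => (hquad c).2.symm) hquad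

end Twisted

/-- If χ is a normalized σ-twisted positive definite function on a real
vector space with antisymmetric bilinear form σ, and |χ(η)| = 1, then
χ(ξ+η) = χ(ξ)·χ(η)·exp((i/2)σ(ξ,η)) for all ξ. -/
theorem twisted_posdef_mul_of_abs_one {Ξ : Type*} [AddCommGroup Ξ] [Module ℝ Ξ]
    (σ : Ξ →ₗ[ℝ] Ξ →ₗ[ℝ] ℝ) (hσ : ∀ ξ η : Ξ, σ ξ η = - σ η ξ)
    (χ : Ξ → ℂ) (hχ : IsTwistedPosDef (fun ξ η => σ ξ η) χ) (hnorm : χ 0 = 1)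
    (η : Ξ) (hη : ‖χ η‖ = 1) :
    ∀ ξ : Ξ, χ (ξ + η) = χ ξ * χ η * Complex.exp ((Complex.I / 2) * ((σ ξ η : ℝ) : ℂ)) := by
  intro ξ
  have hσ_self (ζ : Ξ) : σ ζ ζ = 0 := by linarith [hσ ζ ζ]
  have hM := hχ.posSemidef_twistedMatrix ![0, η, ξ + η]
  have key : χ ξ * exp (I / 2 * (σ ξ η : ℂ)) = starRingEnd ℂ (χ η) * χ (ξ + η) := by
    simpa [twistedMatrix, hσ_self, hσ η ξ] using hM.apply_eq_star_mul_of_norm_eq_one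
      (i := 0) (j := 1) (by simp [twistedMatrix, hnorm]) (by simp [twistedMatrix, hnorm, hσ_self])
      (by simp [twistedMatrix, hη]) 2
  have hunit : χ η * starRingEnd ℂ (χ η) = 1 := by
    rw [mul_conj, normSq_eq_norm_sq, hη]; simp
  linear_combination -(χ η) * key - χ (ξ + η) * hunit
end

section
/- Let ν be a probability measure on ℝⁿ whose translates depend norm-continuously on the shift in total variation norm (i.e. ‖ν − ν(·−x)‖_TV → 0 as x → 0). Then ν is absolutely continuous with respect to Lebesgue measure. -/
/-!
Let `s` be Lebesgue-null. Since Lebesgue measure is translation invariant, `ν ∗ volume ≪ volume`,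
and Tonelli writes `(ν ∗ volume) s` as the integral of `x ↦ ν (s - x)`; hence `ν (s - x) = 0` for
almost every `x`, in particular for some `x` arbitrarily close to `0`. Continuity of the
translates in total variation then forces `ν s = 0`.
-/

open MeasureTheory Filter Topology
open scoped ENNReal NNReal

namespace MeasureTheory.Measure

variable {G : Type*} [AddGroup G] [MeasurableSpace G] [MeasurableAdd₂ G]

theorem conv_apply_eq_lintegral_measure_preimage_add_right (μ ν : Measure G) [SFinite μ]
    [SFinite ν] {s : Set G} (hs : MeasurableSet s) :
    (μ ∗ ν) s = ∫⁻ y, μ ((· + y) ⁻¹' s) ∂ν := by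
  rw [conv, map_apply measurable_add hs, prod_apply_symm (hs.preimage measurable_add)]
  rfl

theorem ae_measure_preimage_add_right_eq_zero (μ ν : Measure G) [SFinite μ] [SFinite ν]
    [ν.IsAddLeftInvariant] {s : Set G} (hs : MeasurableSet s) (hνs : ν s = 0) :
    ∀ᵐ y ∂ν, μ ((· + y) ⁻¹' s) = 0 := by
  have hconv : (μ ∗ ν) s = 0 := conv_absolutelyContinuous AbsolutelyContinuous.rfl hνs
  rw [conv_apply_eq_lintegral_measure_preimage_add_right μ ν hs] at hconv
  exact (lintegral_eq_zero_iff
    (measurable_measure_prodMk_right (hs.preimage measurable_add))).1 hconv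

theorem absolutelyContinuous_of_eventually_le_measure_preimage_add [TopologicalSpace G]
    (ν μ : Measure G) [SFinite ν] [SFinite μ] [μ.IsAddLeftInvariant] [μ.IsOpenPosMeasure]
    (h : ∀ s, MeasurableSet s → ∀ ε : ℝ≥0, 0 < ε →
      ∀ᶠ x in 𝓝 0, ν s ≤ ν ((· + x) ⁻¹' s) + ε) :
    ν ≪ μ := by
  refine AbsolutelyContinuous.mk fun s hs hμs => nonpos_iff_eq_zero.1 ?_
  refine ENNReal.le_of_forall_pos_le_add fun ε hε _ => ?_
  obtain ⟨U, hU, hUs⟩ := (h s hs ε hε).exists_mem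
  obtain ⟨x, hxU, hx⟩ := exists_mem_of_measure_ne_zero_of_ae (measure_pos_of_mem_nhds μ hU).ne'
    (ae_restrict_of_ae (ae_measure_preimage_add_right_eq_zero ν μ hs hμs))
  simpa [hx] using hUs x hxU

end MeasureTheory.Measure

open MeasureTheory

/-- If the translates of a probability measure ν on ℝⁿ depend continuously on
the shift in total variation norm (uniformly over measurable sets), then ν is absolutely
continuous with respect to Lebesgue measure. -/
theorem absolutelyContinuous_of_tv_continuous_translates {n : ℕ}
    (ν : Measure (Fin n → ℝ)) [IsProbabilityMeasure ν]
    (hTV : ∀ ε : ℝ, 0 < ε → ∃ δ : ℝ, 0 < δ ∧ ∀ x : Fin n → ℝ, ‖x‖ < δ →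
      ∀ s : Set (Fin n → ℝ), MeasurableSet s →
        |(ν s).toReal - ((ν.map (fun y => y + x)) s).toReal| < ε) :
    ν ≪ (volume : Measure (Fin n → ℝ)) := by
  refine Measure.absolutelyContinuous_of_eventually_le_measure_preimage_add ν volume
    fun s hs ε hε => ?_
  obtain ⟨δ, hδ, hδν⟩ := hTV ε hε
  filter_upwards [Metric.ball_mem_nhds 0 hδ] with x hx
  have hclose := hδν x (mem_ball_zero_iff.1 hx) s hs
  rw [Measure.map_apply (measurable_add_const x) hs] at hclose
  rw [← ENNReal.toReal_le_toReal (measure_ne_top ν s) (by finiteness),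
    ENNReal.toReal_add (measure_ne_top ν _) ENNReal.coe_ne_top, ENNReal.coe_toReal]
  linarith [(abs_sub_lt_iff.1 hclose).1]
end

section
/- Let f : Ξ_out → ℂ be Δσ-twisted positive definite and normalized, where Δσ = σ_out − S^⊤σ_in S, and suppose f satisfies the homomorphism-type identity f(ξ+η) = exp((i/2)Δσ(ξ,η))·f(ξ)f(η) for all ξ,η. Then |f(ξ)| = 1 for all ξ, Δσ = 0, and f(ξ) = exp(i⟨λ,ξ⟩) for some λ in the dual of Ξ_out provided f is continuous and Ξ_out is finite dimensional. -/
/-!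
Taking `η = -ξ` in the twisted multiplicativity gives `f ξ * f (-ξ) = 1`, while twisted positive
definiteness on the two points `0, ξ` makes `f (-ξ) = conj (f ξ)`; hence `‖f ξ‖ = 1`. Comparing the
twisted products for `ξ + η` and `η + ξ` gives `exp (i Δσ(ξ, η)) = 1`, and scaling `ξ` forces
`Δσ = 0`. Then `f` is a continuous unitary character of a real vector space: lifting it through
the covering map `exp` gives a continuous logarithm, which is additive by uniqueness of lifts,
hence linear, and purely imaginary because `‖f‖ = 1`.
-/

open Complex BigOperators

open ComplexConjugate

theorem eq_zero_of_forall_exp_mul_mul_I_eq_one {d : ℝ} (h : ∀ t : ℝ, exp (↑(t * d) * I) = 1) :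
    d = 0 := by
  by_contra hd
  have hπ := h (Real.pi / d)
  rw [div_mul_cancel₀ _ hd, exp_pi_mul_I] at hπ
  norm_num at hπ

section TwistedCharacter

variable {Ξ : Type*} [AddCommGroup Ξ] [Module ℝ Ξ] {B : Ξ →ₗ[ℝ] Ξ →ₗ[ℝ] ℝ} {f : Ξ → ℂ}

theorem twistedSum_pair (hB : B.IsAlt) (ξ : Ξ) (a b : ℂ) :
    twistedSum (fun ξ η => B ξ η) f ![0, ξ] ![a, b] =
      (conj a * a + conj b * b) * f 0 + conj a * b * f ξ + conj b * a * f (-ξ) := by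
  simp only [twistedSum, Fin.sum_univ_two, Matrix.cons_val_zero, Matrix.cons_val_one,
    Matrix.cons_val_fin_one, sub_zero, zero_sub, sub_self, map_zero, LinearMap.zero_apply,
    hB.self_eq_zero, ofReal_zero, mul_zero, neg_zero, exp_zero, mul_one]
  ring

theorem IsTwistedPosDef.apply_neg (hB : B.IsAlt) (hf : IsTwistedPosDef (fun ξ η => B ξ η) f)
    (ξ : Ξ) : f (-ξ) = conj (f ξ) := by
  have h₁ := (hf 2 ![0, ξ] ![1, 0]).2
  have h₂ := (hf 2 ![0, ξ] ![1, 1]).2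
  have h₃ := (hf 2 ![0, ξ] ![1, I]).2
  -- these give `Im (f 0) = 0`, `Im (f ξ + f (-ξ)) = 0` and `Re (f ξ - f (-ξ)) = 0`
  simp only [twistedSum_pair hB] at h₁ h₂ h₃
  simp only [map_one, mul_one, map_zero, mul_zero, add_zero, one_mul, zero_mul, add_im, mul_im,
    add_re, one_re, one_im, conj_I, neg_mul, I_mul_I, neg_neg, I_re, I_im, zero_add, neg_im]
    at h₁ h₂ h₃
  apply Complex.ext <;> simp only [conj_re, conj_im] <;> linarith

variable (B f) in
def IsTwistedMul : Prop :=
  ∀ ξ η, f (ξ + η) = exp (I / 2 * (B ξ η : ℂ)) * f ξ * f η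

namespace IsTwistedMul

theorem mul_apply_neg (hf : IsTwistedMul B f) (hB : B.IsAlt) (h0 : f 0 = 1) (ξ : Ξ) :
    f ξ * f (-ξ) = 1 := by
  simpa [hB.self_eq_zero, h0] using (hf ξ (-ξ)).symm

theorem norm_eq_one (hf : IsTwistedMul B f) (hB : B.IsAlt) (h0 : f 0 = 1)
    (hpos : IsTwistedPosDef (fun ξ η => B ξ η) f) (ξ : Ξ) : ‖f ξ‖ = 1 := by
  have h := hf.mul_apply_neg hB h0 ξ
  rw [hpos.apply_neg hB, mul_conj, ← ofReal_one, ofReal_inj, normSq_eq_norm_sq] at h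
  exact (pow_eq_one_iff_of_nonneg (norm_nonneg _) two_ne_zero).mp h

theorem exp_apply_mul_I_eq_one (hf : IsTwistedMul B f) (hB : B.IsAlt) (hne : ∀ ξ, f ξ ≠ 0)
    (ξ η : Ξ) : exp (B ξ η * I) = 1 := by
  have h : exp (I / 2 * (B ξ η : ℂ)) = exp (-(I / 2 * (B ξ η : ℂ))) := by
    have h := (hf ξ η).symm.trans (add_comm ξ η ▸ hf η ξ)
    rw [← hB.neg ξ η, mul_assoc, mul_assoc, mul_comm (f η),
      mul_left_inj' (mul_ne_zero (hne ξ) (hne η))] at h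
    simpa using h
  calc exp (B ξ η * I) = exp (I / 2 * (B ξ η : ℂ)) * exp (I / 2 * (B ξ η : ℂ)) := by
        rw [← exp_add]; ring_nf
    _ = exp (-(I / 2 * (B ξ η : ℂ))) * exp (I / 2 * (B ξ η : ℂ)) := by rw [← h]
    _ = 1 := by rw [← exp_add, neg_add_cancel, exp_zero]

theorem apply_eq_zero (hf : IsTwistedMul B f) (hB : B.IsAlt) (h0 : f 0 = 1) (ξ η : Ξ) :
    B ξ η = 0 :=
  eq_zero_of_forall_exp_mul_mul_I_eq_one fun t => by
    simpa using hf.exp_apply_mul_I_eq_one hB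
      (fun ξ => left_ne_zero_of_mul_eq_one (hf.mul_apply_neg hB h0 ξ)) (t • ξ) η

end IsTwistedMul

end TwistedCharacter

section ContinuousCharacter

variable {E : Type*} [NormedAddCommGroup E] [NormedSpace ℝ E] {f : E → ℂ}

theorem exists_continuousLinearMap_exp_eq (hc : Continuous f) (h0 : f 0 = 1)
    (hne : ∀ ξ, f ξ ≠ 0) (hmul : ∀ ξ η, f (ξ + η) = f ξ * f η) :
    ∃ L : E →L[ℝ] ℂ, ∀ ξ, f ξ = exp (L ξ) := by
  obtain ⟨L, ⟨hL0, hL⟩, -⟩ := isCoveringMapOn_exp.existsUnique_continuousMap_lifts ⟨f, hc⟩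
    (a₀ := 0) (e₀ := 0) (by simp [h0]) hne
  have hLf : ∀ ξ, exp (L ξ) = f ξ := fun ξ => congrFun hL ξ
  -- both sides lift `(ξ, η) ↦ f (ξ + η)` through `exp` and vanish at the origin
  have hadd : ∀ ξ η, L (ξ + η) = L ξ + L η := by
    let F : C(E × E, ℂ) := ⟨fun p => f (p.1 + p.2), by fun_prop⟩
    have huniq := (isCoveringMapOn_exp.existsUnique_continuousMap_lifts F (a₀ := 0) (e₀ := 0)
      (by simp [F, h0]) fun p => hne _).unique
      (y₁ := L.comp ⟨fun p => p.1 + p.2, by fun_prop⟩)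
      (y₂ := ⟨fun p => L p.1 + L p.2, by fun_prop⟩)
      ⟨by simp [hL0], by ext p; simp [F, hLf]⟩
      ⟨by simp [hL0], by ext p; simp [F, exp_add, hLf, hmul]⟩
    exact fun ξ η => congrArg (· (ξ, η)) huniq
  exact ⟨AddMonoidHom.toRealLinearMap (AddMonoidHom.mk' L hadd) L.continuous,
    fun ξ => (hLf ξ).symm⟩

theorem exists_linearMap_exp_I_mul_eq (hc : Continuous f) (h0 : f 0 = 1)
    (hnorm : ∀ ξ, ‖f ξ‖ = 1) (hmul : ∀ ξ η, f (ξ + η) = f ξ * f η) :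
    ∃ lam : E →ₗ[ℝ] ℝ, ∀ ξ, f ξ = exp (I * lam ξ) := by
  obtain ⟨L, hL⟩ := exists_continuousLinearMap_exp_eq hc h0
    (fun ξ => norm_ne_zero_iff.mp (by simp [hnorm])) hmul
  have hre : ∀ ξ, (L ξ).re = 0 := fun ξ => by
    simpa [hL, norm_exp] using hnorm ξ
  refine ⟨imLm.comp (L : E →ₗ[ℝ] ℂ), fun ξ => ?_⟩
  rw [hL]
  congr 1
  apply Complex.ext <;> simp [hre]

end ContinuousCharacter

theorem noiseless_channel_characterization_general {Ξout Ξin : Type*}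
    [NormedAddCommGroup Ξout] [NormedSpace ℝ Ξout]
    [AddCommGroup Ξin] [Module ℝ Ξin]
    (σout : Ξout →ₗ[ℝ] Ξout →ₗ[ℝ] ℝ) (σin : Ξin →ₗ[ℝ] Ξin →ₗ[ℝ] ℝ)
    (hout : ∀ ξ η : Ξout, σout ξ η = - σout η ξ)
    (hin : ∀ ξ η : Ξin, σin ξ η = - σin η ξ)
    (S : Ξout →ₗ[ℝ] Ξin) (f : Ξout → ℂ)
    (hf : IsTwistedPosDef (fun ξ η => σout ξ η - σin (S ξ) (S η)) f)
    (hnorm : f 0 = 1)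
    (hhom : ∀ ξ η : Ξout, f (ξ + η) =
      Complex.exp ((Complex.I / 2) * (((σout ξ η - σin (S ξ) (S η)) : ℝ) : ℂ)) * f ξ * f η) :
    (∀ ξ : Ξout, ‖f ξ‖ = 1) ∧
    (∀ ξ η : Ξout, σout ξ η - σin (S ξ) (S η) = 0) ∧
    (Continuous f → ∃ lam : Ξout →ₗ[ℝ] ℝ,
      ∀ ξ : Ξout, f ξ = Complex.exp (Complex.I * ((lam ξ : ℝ) : ℂ))) := by
  set Δσ : Ξout →ₗ[ℝ] Ξout →ₗ[ℝ] ℝ := σout - σin.compl₁₂ S S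
  have hΔ : Δσ.IsAlt := fun ξ => by
    have h₁ := hout ξ ξ
    have h₂ := hin (S ξ) (S ξ)
    simp only [Δσ, LinearMap.sub_apply, LinearMap.compl₁₂_apply]
    linarith
  have hmul : IsTwistedMul Δσ f := hhom
  have habs := fun ξ => hmul.norm_eq_one hΔ hnorm hf ξ
  have hzero := hmul.apply_eq_zero hΔ hnorm
  refine ⟨habs, hzero, fun hc => exists_linearMap_exp_I_mul_eq hc hnorm habs fun ξ η => ?_⟩
  simpa [hzero ξ η] using hmul ξ η

/-- A normalized Δσ-twisted positive definite noise function satisfying the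
homomorphism identity f(ξ+η) = exp((i/2)Δσ(ξ,η)) f(ξ) f(η) has |f| ≡ 1, forces Δσ = 0,
and, if f is continuous (on a finite-dimensional Ξ_out), f(ξ) = exp(i⟨λ,ξ⟩) for some λ in
the dual space. -/
theorem noiseless_channel_characterization {Ξout Ξin : Type*}
    [NormedAddCommGroup Ξout] [NormedSpace ℝ Ξout] [FiniteDimensional ℝ Ξout]
    [AddCommGroup Ξin] [Module ℝ Ξin]
    (σout : Ξout →ₗ[ℝ] Ξout →ₗ[ℝ] ℝ) (σin : Ξin →ₗ[ℝ] Ξin →ₗ[ℝ] ℝ)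
    (hout : ∀ ξ η : Ξout, σout ξ η = - σout η ξ)
    (hin : ∀ ξ η : Ξin, σin ξ η = - σin η ξ)
    (S : Ξout →ₗ[ℝ] Ξin) (f : Ξout → ℂ)
    (hf : IsTwistedPosDef (fun ξ η => σout ξ η - σin (S ξ) (S η)) f)
    (hnorm : f 0 = 1)
    (hhom : ∀ ξ η : Ξout, f (ξ + η) =
      Complex.exp ((Complex.I / 2) * (((σout ξ η - σin (S ξ) (S η)) : ℝ) : ℂ)) * f ξ * f η) :
    (∀ ξ : Ξout, ‖f ξ‖ = 1) ∧
    (∀ ξ η : Ξout, σout ξ η - σin (S ξ) (S η) = 0) ∧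
    (Continuous f → ∃ lam : Ξout →ₗ[ℝ] ℝ,
      ∀ ξ : Ξout, f ξ = Complex.exp (Complex.I * ((lam ξ : ℝ) : ℂ))) :=
  noiseless_channel_characterization_general σout σin hout hin S f hf hnorm hhom
end

section
/- Let S : Ξ_out → Ξ_in be linear with Δσ = σ_out − S^⊤σ_in S. Define S_N : Ξ_out → Ξ_in ⊕ Ξ_out by S_Nξ = (Sξ, ξ) with the form σ_in ⊕ Δσ on the direct sum, and S_E : Ξ_in ⊕ Ξ_out → Ξ_in by S_E(ξ₁,ξ₂) = ξ₁. Then (σ_out) − S_N^⊤(σ_in ⊕ Δσ)S_N = 0 and (σ_in ⊕ Δσ) − S_E^⊤σ_in S_E = 0 ⊕ Δσ; consequently S_E ∘ S_N = S and any Δσ-twisted positive definite f on Ξ_out yields a factorization of the quasifree channel data (S,f) into a noiseless part (S_N, 1) and an expansion (S_E, (ξ₁,ξ₂) ↦ f(ξ₂)). -/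
open Complex BigOperators

/-- Noise factorization at the phase-space level. With
Δσ = σ_out − S^⊤σ_in S, S_N ξ = (Sξ, ξ) into Ξ_in ⊕ Ξ_out carrying the form σ_in ⊕ Δσ,
and S_E(ξ₁,ξ₂) = ξ₁, one has σ_out − S_N^⊤(σ_in ⊕ Δσ)S_N = 0,
(σ_in ⊕ Δσ) − S_E^⊤σ_in S_E = 0 ⊕ Δσ, S_E ∘ S_N = S, and any Δσ-twisted positive
definite noise function f factorizes the channel data (S, f) into the noiseless part
(S_N, 1) and the expansion (S_E, (ξ₁,ξ₂) ↦ f(ξ₂)). -/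
theorem quasifree_noise_factorization {Ξin Ξout : Type*}
    [AddCommGroup Ξin] [Module ℝ Ξin] [AddCommGroup Ξout] [Module ℝ Ξout]
    (σin : Ξin →ₗ[ℝ] Ξin →ₗ[ℝ] ℝ) (σout : Ξout →ₗ[ℝ] Ξout →ₗ[ℝ] ℝ)
    (hin : ∀ ξ η : Ξin, σin ξ η = - σin η ξ)
    (hout : ∀ ξ η : Ξout, σout ξ η = - σout η ξ)
    (S : Ξout →ₗ[ℝ] Ξin)
    (Δσ : Ξout → Ξout → ℝ) (hΔσ : ∀ ξ η, Δσ ξ η = σout ξ η - σin (S ξ) (S η))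
    (SN : Ξout → Ξin × Ξout) (hSN : ∀ ξ, SN ξ = (S ξ, ξ))
    (SE : Ξin × Ξout → Ξin) (hSE : ∀ p, SE p = p.1) :
    (∀ ξ η : Ξout,
      σout ξ η - (σin (SN ξ).1 (SN η).1 + Δσ (SN ξ).2 (SN η).2) = 0) ∧
    (∀ p q : Ξin × Ξout,
      (σin p.1 q.1 + Δσ p.2 q.2) - σin (SE p) (SE q) = Δσ p.2 q.2) ∧
    (∀ ξ : Ξout, SE (SN ξ) = S ξ) ∧
    (∀ f : Ξout → ℂ, IsTwistedPosDef Δσ f →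
      IsTwistedPosDef (fun ξ η : Ξout => σout ξ η - (σin (SN ξ).1 (SN η).1 + Δσ (SN ξ).2 (SN η).2))
        (fun _ : Ξout => (1 : ℂ)) ∧
      IsTwistedPosDef (fun p q : Ξin × Ξout => (σin p.1 q.1 + Δσ p.2 q.2) - σin (SE p) (SE q))
        (fun p : Ξin × Ξout => f p.2) ∧
      (∀ ξ : Ξout, (1 : ℂ) * f ((SN ξ).2) = f ξ)) := by
  have h1 : ∀ ξ η : Ξout, σout ξ η - (σin (SN ξ).1 (SN η).1 + Δσ (SN ξ).2 (SN η).2) = 0 := by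
    intro ξ η; rw [hSN, hSN, hΔσ]; ring
  have h2 : ∀ p q : Ξin × Ξout, (σin p.1 q.1 + Δσ p.2 q.2) - σin (SE p) (SE q) = Δσ p.2 q.2 := by
    intro p q; rw [hSE, hSE]; ring
  refine ⟨h1, h2, fun ξ => by rw [hSN, hSE], fun f hf => ⟨?_, ?_, fun ξ => by rw [hSN, one_mul]⟩⟩
  · intro N ξ c
    have key : twistedSum (fun ξ η : Ξout =>
        σout ξ η - (σin (SN ξ).1 (SN η).1 + Δσ (SN ξ).2 (SN η).2))
        (fun _ : Ξout => (1 : ℂ)) ξ c = (starRingEnd ℂ) (∑ k, c k) * (∑ k, c k) := by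
      unfold twistedSum
      simp only [h1, Complex.ofReal_zero, mul_zero, Complex.exp_zero, mul_one, map_sum]
      rw [Finset.sum_mul]
      refine Finset.sum_congr rfl fun k _ => ?_
      rw [Finset.mul_sum]
    rw [key, mul_comm, Complex.mul_conj]
    simp [Complex.normSq_nonneg]
  · intro N ξ c
    have key : twistedSum
        (fun p q : Ξin × Ξout => (σin p.1 q.1 + Δσ p.2 q.2) - σin (SE p) (SE q))
        (fun p : Ξin × Ξout => f p.2) ξ c = twistedSum Δσ f (fun k => (ξ k).2) c := by
      unfold twistedSum
      exact Finset.sum_congr rfl fun k _ => Finset.sum_congr rfl fun l _ => by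
        simp only [h2, Prod.snd_sub]
    rw [key]; exact hf N _ c
end
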